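/- Let v1,...,vn be nonzero integers with gcd(v1,...,vn) = 1, let T = π(ℝ·(v1,...,vn)) ⊆ (ℝ/ℤ)ⁿ be the corresponding 1-dimensional subtorus, and suppose v1² + ⋯ + vn² > (1/(ω_{n-1} ε^{n-1}))² for some ε > 0. Then T is ε-dense in some subtorus U of (ℝ/ℤ)ⁿ of dimension at least 2, with respect to the L² metric. -/

import Mathlib

/-- The volume of the Euclidean unit ball in ℝ^m. -/
noncomputable def unitBallVol (m : ℕ) : ℝ :=
  Real.pi ^ ((m : ℝ) / 2) / Real.Gamma ((m : ℝ) / 2 + 1)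

/-- The Euclidean (L²) norm of a vector in ℝⁿ. -/
noncomputable def l2norm {n : ℕ} (x : Fin n → ℝ) : ℝ := Real.sqrt (∑ i, (x i) ^ 2)

/-!
Minkowski's convex body theorem, applied to the open cylinder of radius `2ε` around the segment
`[-v, v]` (volume `2‖v‖ · ω_{n-1} (2ε)^{n-1} > 2ⁿ`), gives a nonzero integer vector `c = θv + e`
with `|θ| < 1` and `‖e‖ < 2ε`. As `v` is primitive, `c` is not on the line `ℝv`, so `W = span(v, c)`
is a rational plane. A point `a v + s c` of `W` lies within `|s - round s| · ‖e‖ ≤ ε` of the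
point `(a + (s - round s) θ) v + round s · c` of `ℝv + ℤⁿ`.
-/

open MeasureTheory Module Metric
open scoped RealInnerProductSpace

lemma unitBallVol_eq (k : ℕ) : unitBallVol k = √Real.pi ^ k / Real.Gamma (k / 2 + 1) := by
  rw [unitBallVol, Real.sqrt_eq_rpow, ← Real.rpow_natCast, ← Real.rpow_mul Real.pi_pos.le]
  ring_nf

lemma unitBallVol_pos (k : ℕ) : 0 < unitBallVol k :=
  div_pos (Real.rpow_pos_of_pos Real.pi_pos _) (Real.Gamma_pos_of_pos (by positivity))

lemma sum_sq_le_one_of_gcd_eq_one {n : ℕ} (hn : n ≤ 1) {v : Fin n → ℤ}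
    (hv : Finset.univ.gcd v = 1) : ∑ i, v i ^ 2 ≤ 1 := by
  interval_cases n
  · simp
  · simp only [Finset.univ_unique, Finset.gcd_singleton, ← Int.abs_eq_normalize] at hv
    rw [Fin.sum_univ_one, ← sq_abs, ← Fin.default_eq_zero, hv, one_pow]

lemma l2norm_eq_norm_toLp {n : ℕ} (x : Fin n → ℝ) :
    l2norm x = ‖(WithLp.toLp 2 x : EuclideanSpace ℝ (Fin n))‖ := by
  simp [l2norm, EuclideanSpace.norm_eq, sq_abs]

lemma exists_intCast_eq_of_gcd_eq_one {ι : Type*} [Fintype ι] {v c : ι → ℤ}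
    (hv : Finset.univ.gcd v = 1) {t : ℝ} (h : ∀ i, (c i : ℝ) = t * v i) : ∃ z : ℤ, t = z := by
  obtain ⟨g, hg⟩ := Finset.univ.gcd_eq_sum_mul v
  refine ⟨∑ i, c i * g i, ?_⟩
  have hg' : (1 : ℝ) = ∑ i, (v i : ℝ) * g i := by exact_mod_cast hv ▸ hg
  push_cast
  simp only [h, mul_assoc, ← Finset.mul_sum, ← hg', mul_one]

lemma exists_norm_smul_sub_sub_intCast_smul_le {F : Type*} [SeminormedAddCommGroup F]
    [NormedSpace ℝ F] {v m : F} {θ δ : ℝ} (h : ‖m - θ • v‖ ≤ 2 * δ) (a s : ℝ) :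
    ∃ t : ℝ, ∃ z : ℤ, ‖t • v - (a • v + s • m) - (z : ℝ) • m‖ ≤ δ := by
  refine ⟨a + (s - round s) * θ, -round s, ?_⟩
  have key : (a + (s - round s) * θ) • v - (a • v + s • m) - ((-round s : ℤ) : ℝ) • m
      = -(s - round s) • (m - θ • v) := by
    push_cast
    simp only [add_smul, sub_smul, neg_smul, smul_sub, mul_smul, neg_sub]
    abel
  rw [key, norm_smul, Real.norm_eq_abs, abs_neg]
  calc |s - round s| * ‖m - θ • v‖ ≤ 1 / 2 * (2 * δ) :=
        mul_le_mul (abs_sub_round s) h (norm_nonneg _) (by norm_num)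
    _ = δ := by ring

section Cylinder

variable {E : Type*} [NormedAddCommGroup E] [InnerProductSpace ℝ E]

/-- The open cylinder of radius `r` whose axis is the segment `[-v, v]`. -/
def segmentCylinder (v : E) (r : ℝ) : Set E :=
  {x | |⟪v, x⟫ / ‖v‖ ^ 2| < 1 ∧ ‖x - (⟪v, x⟫ / ‖v‖ ^ 2) • v‖ < r}

lemma neg_mem_segmentCylinder {v x : E} {r : ℝ} (hx : x ∈ segmentCylinder v r) :
    -x ∈ segmentCylinder v r := by
  obtain ⟨h₁, h₂⟩ := hx
  refine ⟨by rwa [inner_neg_right, neg_div, abs_neg], ?_⟩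
  rwa [inner_neg_right, neg_div, neg_smul, sub_neg_eq_add, ← norm_neg, neg_add_eq_sub, neg_sub]

lemma convex_segmentCylinder (v : E) (r : ℝ) : Convex ℝ (segmentCylinder v r) := by
  let coeff : E →ₗ[ℝ] ℝ := (‖v‖ ^ 2)⁻¹ • innerₛₗ ℝ v
  have hcoeff (x : E) : coeff x = ⟪v, x⟫ / ‖v‖ ^ 2 := by
    simp [coeff, div_eq_inv_mul]
  have : segmentCylinder v r =
      coeff ⁻¹' Set.Ioo (-1) 1 ∩ (LinearMap.id - coeff.smulRight v : E →ₗ[ℝ] E) ⁻¹' ball 0 r := by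
    ext x
    simp [segmentCylinder, hcoeff, abs_lt]
  rw [this]
  exact ((convex_Ioo _ _).linear_preimage _).inter ((convex_ball _ _).linear_preimage _)

lemma abs_lt_one_of_smul_mem_segmentCylinder {v : E} (hv : v ≠ 0) {t r : ℝ}
    (h : t • v ∈ segmentCylinder v r) : |t| < 1 := by
  have : ⟪v, t • v⟫ / ‖v‖ ^ 2 = t := by
    rw [real_inner_smul_right, real_inner_self_eq_norm_sq, mul_div_assoc,
      div_self (by positivity), mul_one]
  exact this ▸ h.1

/-- The cylinder `|y₀| < L`, `‖(y₁, …, yₖ)‖ < r`, written as a preimage of a product so that its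
volume is a product of volumes. -/
def standardCylinder (k : ℕ) (L r : ℝ) : Set (EuclideanSpace ℝ (Fin (k + 1))) :=
  WithLp.ofLp ⁻¹' (MeasurableEquiv.piFinSuccAbove (fun _ => ℝ) 0 ⁻¹'
    (Set.Ioo (-L) L ×ˢ (WithLp.toLp 2 ⁻¹' ball (0 : EuclideanSpace ℝ (Fin k)) r)))

lemma mem_standardCylinder {k : ℕ} {L r : ℝ} {y : EuclideanSpace ℝ (Fin (k + 1))} :
    y ∈ standardCylinder k L r ↔
      |y 0| < L ∧ ‖(WithLp.toLp 2 fun j : Fin k => y j.succ : EuclideanSpace ℝ (Fin k))‖ < r := by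
  simp only [standardCylinder, Set.mem_preimage, MeasurableEquiv.piFinSuccAbove_apply,
    Set.mem_prod, Set.mem_Ioo, mem_ball_zero_iff, abs_lt]
  rfl

lemma volume_standardCylinder (k : ℕ) [NeZero k] {L r : ℝ} (hL : 0 ≤ L) (hr : 0 ≤ r) :
    volume (standardCylinder k L r) = ENNReal.ofReal (2 * L * r ^ k * unitBallVol k) := by
  have hball : MeasurableSet (WithLp.toLp 2 ⁻¹' ball (0 : EuclideanSpace ℝ (Fin k)) r) :=
    measurableSet_ball.preimage (PiLp.volume_preserving_toLp _).measurable
  have hprod := measurableSet_Ioo (a := -L) (b := L) |>.prod hball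
  rw [standardCylinder, (PiLp.volume_preserving_ofLp _).measure_preimage
      ((MeasurableEquiv.measurableSet_preimage _).mpr hprod).nullMeasurableSet,
    (volume_preserving_piFinSuccAbove (fun _ => ℝ) 0).measure_preimage hprod.nullMeasurableSet,
    Measure.volume_eq_prod, Measure.prod_prod, Real.volume_Ioo,
    (PiLp.volume_preserving_toLp _).measure_preimage measurableSet_ball.nullMeasurableSet,
    EuclideanSpace.volume_ball, Fintype.card_fin, ← unitBallVol_eq, ← ENNReal.ofReal_pow hr,
    ← ENNReal.ofReal_mul (pow_nonneg hr k), ← ENNReal.ofReal_mul (by linarith)]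
  ring_nf

lemma segmentCylinder_eq_preimage_standardCylinder {k : ℕ} {v : E} (hv : v ≠ 0)
    (b : OrthonormalBasis (Fin (k + 1)) ℝ E) (hb : b 0 = ‖v‖⁻¹ • v) (r : ℝ) :
    segmentCylinder v r = b.repr ⁻¹' standardCylinder k ‖v‖ r := by
  have hv' : 0 < ‖v‖ := norm_pos_iff.mpr hv
  ext x
  rw [Set.mem_preimage, mem_standardCylinder, segmentCylinder, Set.mem_ofPred_eq]
  set c := ⟪v, x⟫ / ‖v‖ ^ 2 with hc
  set tail : EuclideanSpace ℝ (Fin k) := WithLp.toLp 2 fun j => b.repr x j.succ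
  have hinner : ⟪v, x⟫ = c * ‖v‖ ^ 2 := by rw [hc, div_mul_cancel₀ _ (by positivity)]
  have hcoord : b.repr x 0 = c * ‖v‖ := by
    rw [b.repr_apply_apply, hb, real_inner_smul_left, hinner]
    field_simp
  have hsplit : ‖x‖ ^ 2 = (c * ‖v‖) ^ 2 + ‖tail‖ ^ 2 := by
    rw [← b.repr.norm_map, EuclideanSpace.norm_sq_eq, EuclideanSpace.norm_sq_eq,
      Fin.sum_univ_succ, ← hcoord]
    simp [tail, sq_abs]
  have hpythagoras : ‖x - c • v‖ ^ 2 = ‖tail‖ ^ 2 := by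
    rw [norm_sub_sq_real, real_inner_smul_right, norm_smul, real_inner_comm, hinner, hsplit,
      Real.norm_eq_abs]
    simp only [mul_pow, sq_abs]
    ring
  rw [sq_eq_sq₀ (norm_nonneg _) (norm_nonneg _)] at hpythagoras
  rw [hcoord, hpythagoras, abs_mul, abs_norm, mul_lt_iff_lt_one_left hv']

lemma volume_segmentCylinder [FiniteDimensional ℝ E] [MeasurableSpace E] [BorelSpace E]
    {k : ℕ} [NeZero k] (hE : finrank ℝ E = k + 1) {v : E} (hv : v ≠ 0) {r : ℝ} (hr : 0 ≤ r) :
    volume (segmentCylinder v r) = ENNReal.ofReal (2 * ‖v‖ * r ^ k * unitBallVol k) := by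
  have hu : Orthonormal ℝ (({0} : Set (Fin (k + 1))).domRestrict fun _ => ‖v‖⁻¹ • v) := by
    rw [orthonormal_iff_ite]
    rintro ⟨i, rfl⟩ ⟨j, rfl⟩
    simp [norm_smul, hv]
  obtain ⟨b, hb⟩ := hu.exists_orthonormalBasis_extension_of_card_eq (by simpa using hE)
  rw [segmentCylinder_eq_preimage_standardCylinder hv b (hb 0 rfl)]
  exact (b.measurePreserving_measurableEquiv.measure_preimage_equiv _).trans
    (volume_standardCylinder k (norm_nonneg v) hr)

end Cylinder

lemma EuclideanSpace.exists_ne_zero_intCast_mem_of_two_pow_card_lt_volume {ι : Type*} [Fintype ι]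
    {s : Set (EuclideanSpace ℝ ι)} (h_symm : ∀ x ∈ s, -x ∈ s) (h_conv : Convex ℝ s)
    (h : 2 ^ Fintype.card ι < volume s) :
    ∃ c : ι → ℤ, c ≠ 0 ∧ WithLp.toLp 2 (fun i => (c i : ℝ)) ∈ s := by
  let b := (EuclideanSpace.basisFun ι ℝ).toBasis
  have hcovol : volume (ZSpan.fundamentalDomain b) = 1 := by
    rw [measure_congr (ZSpan.fundamentalDomain_ae_parallelepiped b volume),
      OrthonormalBasis.coe_toBasis, OrthonormalBasis.volume_parallelepiped]
  have : Countable (Submodule.span ℤ (Set.range b)).toAddSubgroup :=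
    inferInstanceAs (Countable (Submodule.span ℤ (Set.range b)))
  obtain ⟨x, hx0, hxs⟩ := exists_ne_zero_mem_lattice_of_measure_mul_two_pow_lt_measure
    (ZSpan.isAddFundamentalDomain' b volume) h_symm h_conv
    (by rwa [hcovol, one_mul, finrank_euclideanSpace])
  choose c hc using (b.mem_span_iff_repr_mem ℤ (x : EuclideanSpace ℝ ι)).mp x.2
  have hx : (x : EuclideanSpace ℝ ι) = WithLp.toLp 2 (fun i => (c i : ℝ)) := by
    ext i
    simpa [b] using (hc i).symm
  refine ⟨c, fun hc0 => hx0 ?_, hx ▸ hxs⟩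
  ext1
  simp [hx, hc0, Pi.zero_def]

lemma exists_ne_zero_intCast_mem_segmentCylinder {ι : Type*} [Fintype ι] {k : ℕ} [NeZero k]
    (hι : Fintype.card ι = k + 1) {v : EuclideanSpace ℝ ι} {ε : ℝ} (hε : 0 < ε)
    (hlong : 1 < unitBallVol k * ε ^ k * ‖v‖) :
    ∃ c : ι → ℤ, c ≠ 0 ∧ WithLp.toLp 2 (fun i => (c i : ℝ)) ∈ segmentCylinder v (2 * ε) := by
  have hv : v ≠ 0 := by rintro rfl; norm_num at hlong
  refine EuclideanSpace.exists_ne_zero_intCast_mem_of_two_pow_card_lt_volume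
    (s := segmentCylinder v (2 * ε)) (fun _ => neg_mem_segmentCylinder)
    (convex_segmentCylinder _ _) ?_
  rw [volume_segmentCylinder (k := k) (by simp [hι]) hv (by positivity), hι,
    show (2 : ENNReal) ^ (k + 1) = ENNReal.ofReal (2 ^ (k + 1)) by simp [ENNReal.ofReal_pow],
    ENNReal.ofReal_lt_ofReal_iff (by have := unitBallVol_pos k; positivity)]
  calc (2 : ℝ) ^ (k + 1) < 2 ^ (k + 1) * (unitBallVol k * ε ^ k * ‖v‖) :=
        lt_mul_of_one_lt_right (by positivity) hlong
    _ = _ := by ring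

lemma linearIndependent_of_intCast_mem_segmentCylinder {ι : Type*} [Fintype ι] {v c : ι → ℤ}
    (hv : Finset.univ.gcd v = 1) (hc : c ≠ 0) {r : ℝ}
    (hcyl : WithLp.toLp 2 (fun i => (c i : ℝ)) ∈
      segmentCylinder (WithLp.toLp 2 fun i => (v i : ℝ) : EuclideanSpace ℝ ι) r) :
    LinearIndependent ℝ ![fun i => (v i : ℝ), fun i => (c i : ℝ)] := by
  have hv0 : (fun i => (v i : ℝ)) ≠ 0 := fun h => one_ne_zero <| hv.symm.trans <|
    Finset.gcd_eq_zero_iff.mpr fun i _ => Int.cast_eq_zero.mp (congrFun h i)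
  refine (LinearIndependent.pair_iff' hv0).mpr fun t ht => hc ?_
  obtain ⟨z, rfl⟩ := exists_intCast_eq_of_gcd_eq_one hv (t := t) fun i => (congrFun ht i).symm
  have hz : |(z : ℝ)| < 1 := abs_lt_one_of_smul_mem_segmentCylinder
    (v := WithLp.toLp 2 fun i => (v i : ℝ)) (by simpa using hv0) (by rwa [← WithLp.toLp_smul, ht])
  obtain rfl : z = 0 := by rw [← Int.abs_lt_one_iff]; exact_mod_cast hz
  exact funext fun i => by simpa using (congrFun ht i).symm

lemma exists_l2norm_sub_le_of_mem_span_pair {n : ℕ} {v c : Fin n → ℤ} {θ ε : ℝ}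
    (h : ‖(WithLp.toLp 2 (fun i => (c i : ℝ)) - θ • WithLp.toLp 2 (fun i => (v i : ℝ)) :
      EuclideanSpace ℝ (Fin n))‖ ≤ 2 * ε)
    {w : Fin n → ℝ} (hw : w ∈ Submodule.span ℝ {fun i => (v i : ℝ), fun i => (c i : ℝ)}) :
    ∃ t : ℝ, ∃ m : Fin n → ℤ, l2norm (fun i => t * v i - w i - m i) ≤ ε := by
  obtain ⟨a, s, rfl⟩ := Submodule.mem_span_pair.mp hw
  obtain ⟨t, z, hz⟩ := exists_norm_smul_sub_sub_intCast_smul_le h a s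
  refine ⟨t, fun i => z * c i, ?_⟩
  rw [l2norm_eq_norm_toLp]
  refine le_of_eq_of_le (congrArg norm ?_) hz
  ext i
  simp

theorem long_subtorus_dense_in_bigger_subtorus_general (n : ℕ) (ε : ℝ) (hε : 0 < ε)
    (v : Fin n → ℤ) (hgcd : Finset.univ.gcd v = 1)
    (hlong : ((∑ i, (v i) ^ 2 : ℤ) : ℝ) > (1 / (unitBallVol (n - 1) * ε ^ (n - 1))) ^ 2) :
    ∃ W : Submodule ℝ (Fin n → ℝ),
      -- W is a rational subspace: it is spanned by integer vectors
      (∃ S : Set (Fin n → ℤ), W = Submodule.span ℝ ((fun z : Fin n → ℤ => fun i => ((z i : ℤ) : ℝ)) '' S)) ∧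
      -- the corresponding subtorus has dimension at least 2
      2 ≤ Module.finrank ℝ W ∧
      -- the line through v is contained in W
      (fun i => ((v i : ℤ) : ℝ)) ∈ W ∧
      -- the subtorus π(ℝv) is ε-dense (in the L² flat-torus metric) in the subtorus π(W)
      (∀ w ∈ W, ∃ t : ℝ, ∃ m : Fin n → ℤ,
        l2norm (fun i => t * v i - w i - m i) ≤ ε) := by
  have h2n : 2 ≤ n := by
    by_contra! hn
    rw [Nat.sub_eq_zero_of_le (by omega : n ≤ 1)] at hlong
    norm_num [unitBallVol] at hlong
    exact (sum_sq_le_one_of_gcd_eq_one (by omega) hgcd).not_gt (by exact_mod_cast hlong)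
  obtain ⟨k, rfl⟩ : ∃ k, n = k + 2 := ⟨n - 2, by omega⟩
  set v' : EuclideanSpace ℝ (Fin (k + 2)) := WithLp.toLp 2 fun i => (v i : ℝ)
  have hnorm : ‖v'‖ ^ 2 = ((∑ i, v i ^ 2 : ℤ) : ℝ) := by
    simp [v', EuclideanSpace.norm_sq_eq, sq_abs]
  have hω : 0 < unitBallVol (k + 1) * ε ^ (k + 1) := mul_pos (unitBallVol_pos _) (by positivity)
  rw [show k + 2 - 1 = k + 1 by omega, ← hnorm] at hlong
  have hlen : 1 < unitBallVol (k + 1) * ε ^ (k + 1) * ‖v'‖ := by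
    rw [← div_lt_iff₀' hω]
    exact lt_of_pow_lt_pow_left₀ 2 (norm_nonneg _) hlong
  obtain ⟨c, hc0, hcyl⟩ :=
    exists_ne_zero_intCast_mem_segmentCylinder (by rw [Fintype.card_fin]) hε hlen
  refine ⟨Submodule.span ℝ {_, fun i => (c i : ℝ)}, ⟨{v, c}, by rw [Set.image_pair]⟩, ?_,
    Submodule.subset_span (Set.mem_insert _ _),
    fun w hw => exists_l2norm_sub_le_of_mem_span_pair hcyl.2.le hw⟩
  rw [← Matrix.range_cons_cons_empty,
    finrank_span_eq_card (linearIndependent_of_intCast_mem_segmentCylinder hgcd hc0 hcyl),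
    Fintype.card_fin]

theorem long_subtorus_dense_in_bigger_subtorus (n : ℕ) (hn : 1 ≤ n) (ε : ℝ) (hε : 0 < ε)
    (v : Fin n → ℤ) (hv : ∀ i, v i ≠ 0) (hgcd : Finset.univ.gcd v = 1)
    (hlong : ((∑ i, (v i) ^ 2 : ℤ) : ℝ) > (1 / (unitBallVol (n - 1) * ε ^ (n - 1))) ^ 2) :
    ∃ W : Submodule ℝ (Fin n → ℝ),
      -- W is a rational subspace: it is spanned by integer vectors
      (∃ S : Set (Fin n → ℤ), W = Submodule.span ℝ ((fun z : Fin n → ℤ => fun i => ((z i : ℤ) : ℝ)) '' S)) ∧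
      -- the corresponding subtorus has dimension at least 2
      2 ≤ Module.finrank ℝ W ∧
      -- the line through v is contained in W
      (fun i => ((v i : ℤ) : ℝ)) ∈ W ∧
      -- the subtorus π(ℝv) is ε-dense (in the L² flat-torus metric) in the subtorus π(W)
      (∀ w ∈ W, ∃ t : ℝ, ∃ m : Fin n → ℤ,
        l2norm (fun i => t * v i - w i - m i) ≤ ε) :=
  long_subtorus_dense_in_bigger_subtorus_general n ε hε v hgcd hlong
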